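/- For every graph G, nucleus(G) is the intersection of all maximum independent sets S of G[L(G)] with no edges to L^c(G), and diadem(G) is the union of all such sets; moreover diadem(G) ⊆ corona(G) ∩ L(G). -/

import Mathlib

open Finset

variable {V : Type*} [Fintype V] [DecidableEq V] (G : SimpleGraph V) [DecidableRel G.Adj]

/-- `N(S)`: the set of vertices adjacent to some vertex of `S`. -/
def nbhd (S : Finset V) : Finset V := S.biUnion (fun v => G.neighborFinset v)

/-- `S` is an independent set of `G`. -/
def Indep (S : Finset V) : Prop := ∀ u ∈ S, ∀ v ∈ S, ¬ G.Adj u v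

/-- The difference `d_G(S) = |S| - |N(S)|`. -/
def diffI (S : Finset V) : ℤ := (S.card : ℤ) - ((nbhd G S).card : ℤ)

/-- `S` is a maximum independent set of `G`. -/
def IsMaxIndep (S : Finset V) : Prop :=
  Indep G S ∧ ∀ T : Finset V, Indep G T → T.card ≤ S.card

/-- `I` is a critical independent set of `G`. -/
def IsCritIndep (I : Finset V) : Prop :=
  Indep G I ∧ ∀ J : Finset V, Indep G J → diffI G J ≤ diffI G I

/-- `I` is a maximum critical independent set of `G`. -/
def IsMaxCritIndep (I : Finset V) : Prop :=
  IsCritIndep G I ∧ ∀ J : Finset V, IsCritIndep G J → J.card ≤ I.card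

/-- `core(G)`: intersection of all maximum independent sets. -/
def core : Set V := {v | ∀ S : Finset V, IsMaxIndep G S → v ∈ S}

/-- `corona(G)`: union of all maximum independent sets. -/
def corona : Set V := {v | ∃ S : Finset V, IsMaxIndep G S ∧ v ∈ S}

/-- `nucleus(G)`: intersection of all maximum critical independent sets. -/
def nucleus : Set V := {v | ∀ S : Finset V, IsMaxCritIndep G S → v ∈ S}

/-- `diadem(G)`: union of all maximum critical independent sets. -/
def diadem : Set V := {v | ∃ S : Finset V, IsMaxCritIndep G S ∧ v ∈ S}

/-- `ker(G)`: intersection of all critical independent sets. -/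
def kerS : Set V := {v | ∀ S : Finset V, IsCritIndep G S → v ∈ S}

/-- A matching of `G`, given as an involution of the vertex set:
unmatched vertices are fixed points, matched vertices are sent to their partner. -/
def IsMatching (M : V → V) : Prop :=
  Function.Involutive M ∧ ∀ v, M v ≠ v → G.Adj v (M v)

/-- Twice the number of edges of the matching `M`, i.e. the number of matched vertices. -/
def matchSize (M : V → V) : ℕ := (univ.filter fun v => M v ≠ v).card

/-- `M` is a maximum matching of `G`. -/
def IsMaxMatching (M : V → V) : Prop :=
  IsMatching G M ∧ ∀ M' : V → V, IsMatching G M' → matchSize M' ≤ matchSize M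

/-- `M` is a matching of the induced subgraph `G[L]`. -/
def IsMatchingOn (L : Finset V) (M : V → V) : Prop :=
  IsMatching G M ∧ ∀ v, M v ≠ v → v ∈ L

/-- `M` is a maximum matching of the induced subgraph `G[L]`. -/
def IsMaxMatchingOn (L : Finset V) (M : V → V) : Prop :=
  IsMatchingOn G L M ∧ ∀ M' : V → V, IsMatchingOn G L M' → matchSize M' ≤ matchSize M

/-- `S` is a maximum independent set of the induced subgraph `G[L]`. -/
def IsMaxIndepOn (L : Finset V) (S : Finset V) : Prop :=
  S ⊆ L ∧ Indep G S ∧ ∀ T : Finset V, T ⊆ L → Indep G T → T.card ≤ S.card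

/-- `core` of the induced subgraph `G[L]`. -/
def coreOn (L : Finset V) : Set V := {v | ∀ S : Finset V, IsMaxIndepOn G L S → v ∈ S}

/-- `D(G[L])`: vertices of `L` missed by some maximum matching of `G[L]`. -/
def Dset (L : Finset V) : Set V := {v | v ∈ L ∧ ∃ M : V → V, IsMaxMatchingOn G L M ∧ M v = v}

/-- The Larson boundary `∂_L(G)` of the set `L`. -/
def boundaryL (L : Finset V) : Set V := {v | v ∈ L ∧ ∃ w, w ∉ L ∧ G.Adj v w}

/-- The critical difference `d(G)`. -/
noncomputable def critDiff : ℤ := sSup {d : ℤ | ∃ X : Finset V, diffI G X = d}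

/-- The difference of `S` computed in the induced subgraph `G[L]`. -/
def diffOn (L : Finset V) (S : Finset V) : ℤ := (S.card : ℤ) - ((nbhd G S ∩ L).card : ℤ)

/-- The critical difference of the induced subgraph `G[L]`. -/
noncomputable def critDiffOn (L : Finset V) : ℤ := sSup {d : ℤ | ∃ X : Finset V, X ⊆ L ∧ diffOn G L X = d}

/-- `G` is a König–Egerváry graph: `α(G) + μ(G) = |V(G)|`. -/
def KonigEgervary : Prop :=
  ∃ (S : Finset V) (M : V → V), IsMaxIndep G S ∧ IsMaxMatching G M ∧
    2 * S.card + matchSize M = 2 * Fintype.card V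

/-!
Larson's observation carries the proof: if `A` is a maximum critical independent set and `B` is
any critical independent set, then `B ∪ N(B) ⊆ A ∪ N(A)`. Criticality of `A` yields Hall's
condition `|T| ≤ |N(T) ∩ A|` for `T ⊆ N(A)`, hence `|N(B) \ N(A)| ≤ |B \ A|`, and no independent
subset of `A ∪ N(A)` is larger than `A`. With `B₁ = B \ (A ∪ N(A))`, comparing `A` with the
independent set `A ∪ B₁` (and symmetrically `B` with `B ∪ A₁`) and adding the two Hall bounds gives
`|B₁| = |N(B₁) \ (A ∪ N(A))| = |N(B) \ (A ∪ N(A))|`; so `A ∪ B₁` is still critical, and maximality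
of `A` makes all three empty.

Hence, for `L = J ∪ N(J)`, the maximum critical independent sets are exactly the maximum
independent sets `S` of `G[L]` with `N(S) ⊆ L`: the latter satisfy `|S| + |N(S)| ≤ |L|` and
`|J| ≤ |S|`, so `d(S) ≥ d(J)`. A critical independent set `S` lies in the maximum independent set
`S ∪ (K \ (S ∪ N(S)))` for any maximum independent set `K`.
-/

lemma Finset.card_sdiff_eq_card_inter_add_card_sdiff_union {α : Type*} [DecidableEq α]
    {P Q : Finset α} (h : Disjoint P Q) (X : Finset α) :
    #(X \ P) = #(X ∩ Q) + #(X \ (P ∪ Q)) := by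
  rw [← card_inter_add_card_sdiff (X \ P) Q, sdiff_sdiff_left]
  congr 2
  ext x
  simp only [mem_inter, mem_sdiff, and_congr_left_iff, and_iff_left_iff_imp]
  exact fun hQ _ hP => disjoint_left.1 h hP hQ

section

variable {G}

lemma mem_nbhd {S : Finset V} {v : V} : v ∈ nbhd G S ↔ ∃ u ∈ S, G.Adj u v := by
  simp [nbhd]

lemma nbhd_mono {S T : Finset V} (h : S ⊆ T) : nbhd G S ⊆ nbhd G T :=
  biUnion_subset_biUnion_of_subset_left _ h

lemma nbhd_union (S T : Finset V) : nbhd G (S ∪ T) = nbhd G S ∪ nbhd G T :=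
  union_biUnion

lemma nbhd_subset_iff {S L : Finset V} :
    nbhd G S ⊆ L ↔ ∀ u ∈ S, ∀ w, w ∉ L → ¬ G.Adj u w := by
  simp only [subset_iff, mem_nbhd]
  exact ⟨fun h u hu w hw huw => hw (h ⟨u, hu, huw⟩), fun h w ⟨u, hu, huw⟩ => by_contra (h u hu w · huw)⟩

lemma disjoint_nbhd_iff {S T : Finset V} :
    Disjoint S (nbhd G T) ↔ ∀ s ∈ S, ∀ t ∈ T, ¬ G.Adj s t := by
  simp only [disjoint_left, mem_nbhd, not_exists, not_and, G.adj_comm]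

lemma disjoint_nbhd_comm {S T : Finset V} : Disjoint S (nbhd G T) ↔ Disjoint T (nbhd G S) := by
  simp only [disjoint_nbhd_iff]
  exact ⟨fun h t ht s hs hts => h s hs t ht hts.symm, fun h s hs t ht hst => h t ht s hs hst.symm⟩

lemma indep_iff_disjoint_nbhd {S : Finset V} : Indep G S ↔ Disjoint S (nbhd G S) :=
  disjoint_nbhd_iff.symm

omit [Fintype V] [DecidableEq V] [DecidableRel G.Adj] in
lemma Indep.mono {S T : Finset V} (hS : Indep G S) (hTS : T ⊆ S) : Indep G T :=
  fun u hu v hv => hS u (hTS hu) v (hTS hv)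

lemma Indep.union {S T : Finset V} (hS : Indep G S) (hT : Indep G T)
    (hST : Disjoint T (nbhd G S)) : Indep G (S ∪ T) := by
  have hedge := disjoint_nbhd_iff.1 hST
  intro u hu v hv huv
  rcases mem_union.1 hu with hu | hu <;> rcases mem_union.1 hv with hv | hv
  · exact hS u hu v hv huv
  · exact hedge v hv u hu huv.symm
  · exact hedge u hu v hv huv
  · exact hT u hu v hv huv

lemma diffI_union_of_disjoint {A T : Finset V} (h : Disjoint T (A ∪ nbhd G A)) :
    diffI G (A ∪ T) = diffI G A + #T - #(nbhd G T \ (A ∪ nbhd G A)) := by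
  have hAT : Disjoint A T := (h.mono_right subset_union_left).symm
  have hNT : Disjoint (nbhd G T) A :=
    (disjoint_nbhd_comm.1 (h.mono_right subset_union_right)).symm
  have hsdiff : nbhd G T \ (A ∪ nbhd G A) = nbhd G T \ nbhd G A :=
    calc nbhd G T \ (A ∪ nbhd G A) = (nbhd G T \ A) \ nbhd G A := sdiff_sdiff_left.symm
      _ = nbhd G T \ nbhd G A := by rw [hNT.sdiff_eq_left]
  have hN : #(nbhd G (A ∪ T)) = #(nbhd G A) + #(nbhd G T \ (A ∪ nbhd G A)) := by
    rw [hsdiff, nbhd_union, union_comm, ← card_sdiff_add_card, add_comm]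
  unfold diffI
  rw [card_union_of_disjoint hAT, hN]
  push_cast
  ring

lemma IsCritIndep.card_le_card_nbhd_inter {A T : Finset V} (hA : IsCritIndep G A)
    (hT : T ⊆ nbhd G A) : #T ≤ #(nbhd G T ∩ A) := by
  have hsub : nbhd G (A \ nbhd G T) ⊆ nbhd G A \ T := by
    intro v hv
    obtain ⟨u, hu, huv⟩ := mem_nbhd.1 hv
    exact mem_sdiff.2 ⟨mem_nbhd.2 ⟨u, (mem_sdiff.1 hu).1, huv⟩,
      fun hvT => (mem_sdiff.1 hu).2 (mem_nbhd.2 ⟨v, hvT, huv.symm⟩)⟩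
  have hcrit := hA.2 (A \ nbhd G T) (hA.1.mono sdiff_subset)
  have h1 := card_le_card hsub
  have h2 := card_sdiff_add_card_eq_card hT
  have h3 := card_sdiff_add_card_inter A (nbhd G T)
  rw [inter_comm]
  unfold diffI at hcrit
  omega

lemma IsCritIndep.card_le_of_subset_union_nbhd {A T : Finset V} (hA : IsCritIndep G A)
    (hT : Indep G T) (hTL : T ⊆ A ∪ nbhd G A) : #T ≤ #A := by
  have hTA : T \ A ⊆ nbhd G A := fun x hx =>
    (mem_union.1 (hTL (mem_sdiff.1 hx).1)).resolve_left (mem_sdiff.1 hx).2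
  have hsub : nbhd G (T \ A) ∩ A ⊆ A \ T := by
    intro v hv
    obtain ⟨hvN, hvA⟩ := mem_inter.1 hv
    obtain ⟨u, hu, huv⟩ := mem_nbhd.1 hvN
    exact mem_sdiff.2 ⟨hvA, fun hvT => hT u (mem_sdiff.1 hu).1 v hvT huv⟩
  calc #T = #(T \ A) + #(T ∩ A) := (card_sdiff_add_card_inter T A).symm
    _ ≤ #(A \ T) + #(A ∩ T) :=
      add_le_add ((hA.card_le_card_nbhd_inter hTA).trans (card_le_card hsub))
        (by rw [inter_comm])
    _ = #A := card_sdiff_add_card_inter A T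

lemma IsCritIndep.card_nbhd_sdiff_le {B : Finset V} (hB : IsCritIndep G B) (A : Finset V) :
    #(nbhd G B \ nbhd G A) ≤ #(B \ A) := by
  refine (hB.card_le_card_nbhd_inter sdiff_subset).trans (card_le_card fun v hv => ?_)
  obtain ⟨hvN, hvB⟩ := mem_inter.1 hv
  obtain ⟨t, ht, htv⟩ := mem_nbhd.1 hvN
  exact mem_sdiff.2 ⟨hvB, fun hvA => (mem_sdiff.1 ht).2 (mem_nbhd.2 ⟨v, hvA, htv.symm⟩)⟩

lemma IsCritIndep.card_le_card_nbhd_sdiff {A T : Finset V} (hA : IsCritIndep G A)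
    (hT : Indep G T) (h : Disjoint T (A ∪ nbhd G A)) :
    #T ≤ #(nbhd G T \ (A ∪ nbhd G A)) := by
  have hcrit := hA.2 _ (hA.1.union hT (h.mono_right subset_union_right))
  rw [diffI_union_of_disjoint h] at hcrit
  omega

lemma IsMaxCritIndep.union_nbhd_subset {A B : Finset V} (hA : IsMaxCritIndep G A)
    (hB : IsCritIndep G B) : B ∪ nbhd G B ⊆ A ∪ nbhd G A := by
  set B₁ := B \ (A ∪ nbhd G A)
  set A₁ := A \ (B ∪ nbhd G B)
  have hB₁ : Disjoint B₁ (A ∪ nbhd G A) := disjoint_sdiff_self_left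
  have hB₁indep : Indep G B₁ := hB.1.mono sdiff_subset
  have h₁ : #B₁ ≤ #(nbhd G B₁ \ (A ∪ nbhd G A)) := hA.1.card_le_card_nbhd_sdiff hB₁indep hB₁
  have h₂ : #(nbhd G B₁ \ (A ∪ nbhd G A)) ≤ #(nbhd G B \ (A ∪ nbhd G A)) :=
    card_le_card (sdiff_subset_sdiff (nbhd_mono sdiff_subset) subset_rfl)
  have h₃ : #A₁ ≤ #(nbhd G A₁ \ (B ∪ nbhd G B)) :=
    hB.card_le_card_nbhd_sdiff (hA.1.1.mono sdiff_subset) disjoint_sdiff_self_left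
  have h₄ : #(nbhd G A₁ \ (B ∪ nbhd G B)) ≤ #(nbhd G A \ (B ∪ nbhd G B)) :=
    card_le_card (sdiff_subset_sdiff (nbhd_mono sdiff_subset) subset_rfl)
  have hAN := indep_iff_disjoint_nbhd.1 hA.1.1
  have hBN := indep_iff_disjoint_nbhd.1 hB.1
  have h₅ : #(A ∩ nbhd G B) + #(nbhd G B \ (A ∪ nbhd G A)) ≤ #(B ∩ nbhd G A) + #B₁ := by
    have h := hB.card_nbhd_sdiff_le A
    rwa [card_sdiff_eq_card_inter_add_card_sdiff_union hAN.symm, union_comm (nbhd G A),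
      inter_comm, card_sdiff_eq_card_inter_add_card_sdiff_union hAN] at h
  have h₆ : #(B ∩ nbhd G A) + #(nbhd G A \ (B ∪ nbhd G B)) ≤ #(A ∩ nbhd G B) + #A₁ := by
    have h := hA.1.card_nbhd_sdiff_le B
    rwa [card_sdiff_eq_card_inter_add_card_sdiff_union hBN.symm, union_comm (nbhd G B),
      inter_comm, card_sdiff_eq_card_inter_add_card_sdiff_union hBN] at h
  have hcrit : IsCritIndep G (A ∪ B₁) :=
    ⟨hA.1.1.union hB₁indep (hB₁.mono_right subset_union_right), fun J hJ =>
      (hA.1.2 J hJ).trans (by rw [diffI_union_of_disjoint hB₁]; omega)⟩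
  have hmax := hA.2 _ hcrit
  rw [card_union_of_disjoint (hB₁.mono_right subset_union_left).symm] at hmax
  have hB₁empty : B₁ = ∅ := card_eq_zero.1 (by omega)
  have hNempty : nbhd G B \ (A ∪ nbhd G A) = ∅ := card_eq_zero.1 (by omega)
  exact union_subset (sdiff_eq_empty_iff_subset.1 hB₁empty)
    (sdiff_eq_empty_iff_subset.1 hNempty)

lemma IsMaxCritIndep.isMaxCritIndep_iff_isMaxIndepOn {J S : Finset V} (hJ : IsMaxCritIndep G J) :
    IsMaxCritIndep G S ↔ IsMaxIndepOn G (J ∪ nbhd G J) S ∧ nbhd G S ⊆ J ∪ nbhd G J := by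
  constructor
  · intro hS
    have hSL := hJ.union_nbhd_subset hS.1
    have hJS := hS.2 J hJ.1
    exact ⟨⟨subset_union_left.trans hSL, hS.1.1,
      fun T hTL hT => (hJ.1.card_le_of_subset_union_nbhd hT hTL).trans hJS⟩,
      subset_union_right.trans hSL⟩
  · rintro ⟨⟨hSL, hSind, hSmax⟩, hNS⟩
    have hJS := hSmax J subset_union_left hJ.1.1
    have hcard := card_le_card (union_subset hSL hNS)
    rw [card_union_of_disjoint (indep_iff_disjoint_nbhd.1 hSind),
      card_union_of_disjoint (indep_iff_disjoint_nbhd.1 hJ.1.1)] at hcard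
    have hd : diffI G J ≤ diffI G S := by unfold diffI; omega
    exact ⟨⟨hSind, fun T hT => (hJ.1.2 T hT).trans hd⟩, fun T hT => (hJ.2 T hT).trans hJS⟩

omit [DecidableEq V] [DecidableRel G.Adj] in
variable (G) in
lemma exists_isMaxIndep : ∃ S : Finset V, IsMaxIndep G S := by
  classical
  obtain ⟨S, hS, hmax⟩ := exists_max_image ((univ : Finset (Finset V)).filter (Indep G)) card
    ⟨∅, mem_filter.2 ⟨mem_univ _, fun u hu => absurd hu (notMem_empty u)⟩⟩
  exact ⟨S, (mem_filter.1 hS).2, fun T hT => hmax T (mem_filter.2 ⟨mem_univ _, hT⟩)⟩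

lemma IsCritIndep.exists_isMaxIndep_superset {S : Finset V} (hS : IsCritIndep G S) :
    ∃ K : Finset V, IsMaxIndep G K ∧ S ⊆ K := by
  obtain ⟨K, hKind, hKmax⟩ := exists_isMaxIndep G
  set L := S ∪ nbhd G S
  have hdisj : Disjoint (K \ L) L := disjoint_sdiff_self_left
  refine ⟨S ∪ K \ L, ⟨hS.1.union (hKind.mono sdiff_subset) (hdisj.mono_right subset_union_right),
    fun T hT => (hKmax T hT).trans ?_⟩, subset_union_left⟩
  calc #K = #(K ∩ L) + #(K \ L) := (card_inter_add_card_sdiff K L).symm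
    _ ≤ #S + #(K \ L) := Nat.add_le_add_right
      (hS.card_le_of_subset_union_nbhd (hKind.mono inter_subset_left) inter_subset_right) _
    _ = #(S ∪ K \ L) := (card_union_of_disjoint (hdisj.mono_right subset_union_left).symm).symm

end

theorem stmt8 (J : Finset V) (hJ : IsMaxCritIndep G J) :
    nucleus G = {v | ∀ S : Finset V,
        IsMaxIndepOn G (J ∪ nbhd G J) S →
          (∀ u ∈ S, ∀ w, w ∉ J ∪ nbhd G J → ¬ G.Adj u w) → v ∈ S} ∧
    diadem G = {v | ∃ S : Finset V,
        IsMaxIndepOn G (J ∪ nbhd G J) S ∧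
          (∀ u ∈ S, ∀ w, w ∉ J ∪ nbhd G J → ¬ G.Adj u w) ∧ v ∈ S} ∧
    diadem G ⊆ corona G ∩ ↑(J ∪ nbhd G J) := by
  refine ⟨?_, ?_, ?_⟩
  · ext v
    simp only [nucleus, hJ.isMaxCritIndep_iff_isMaxIndepOn, nbhd_subset_iff, and_imp]
  · ext v
    simp only [diadem, hJ.isMaxCritIndep_iff_isMaxIndepOn, nbhd_subset_iff, and_assoc]
  · rintro v ⟨S, hS, hv⟩
    obtain ⟨K, hK, hSK⟩ := hS.1.exists_isMaxIndep_superset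
    exact ⟨⟨K, hK, hSK hv⟩, hJ.union_nbhd_subset hS.1 (mem_union_left _ hv)⟩
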